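/- arXiv:math/0703618 — 2 statements merged into one kernel-verified Lean document; each statement's English description precedes it below -/
import Mathlib

section
/- Let R be an integral domain (not necessarily Noetherian) containing a field of characteristic zero. If each height one prime ideal of the polynomial ring R[X] is a set theoretic complete intersection, then R is normal, i.e., R is integrally closed in its field of fractions. -/
/-!
Let `x` be an element of the fraction field `K` of `R` that is integral over `R`. The kernel `P`
of `R[X] → K, X ↦ x` is the contraction of the prime `(X - x)` of `K[X]`, a localization of
`R[X]`, so `P` is a prime of height one. Write `P = √(f)`. Some power of a monic polynomial
vanishing at `x` is a multiple of `f`, so the leading coefficient `u` of `f` is a unit; in `K[X]`,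
`f` divides a power of `X - x`, so `f = u (X - x)^m` with `m ≥ 1`. The coefficient of `X^(m-1)`
is then `-m u x`, and `m` is invertible in `R` because `R` contains `ℚ`; hence `x ∈ R`.
-/

open Polynomial

/-- The height of an ideal: the infimum of the heights (in the prime spectrum)
of the prime ideals containing it. -/
noncomputable def idealHeight {A : Type*} [CommRing A] (I : Ideal A) : ℕ∞ :=
  ⨅ (P : PrimeSpectrum A) (_ : I ≤ P.asIdeal), Order.height P

/-- An ideal `I` of a commutative ring is a set theoretic complete intersection if there
exist `n` elements, with `n` the height of `I`, such that the radical of `I` equals the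
radical of the ideal they generate. -/
def IsSTCI {A : Type*} [CommRing A] (I : Ideal A) : Prop :=
  ∃ n : ℕ, (n : ℕ∞) = idealHeight I ∧
    ∃ a : Fin n → A, I.radical = (Ideal.span (Set.range a)).radical

open Ideal

theorem idealHeight_eq_height {A : Type*} [CommRing A] (I : Ideal A) :
    idealHeight I = I.height := by
  rw [idealHeight, height_eq_inf_minimalPrimes]
  apply le_antisymm
  · refine le_iInf₂ fun J hJ => ?_
    have := hJ.isPrime
    exact (iInf₂_le (⟨J, this⟩ : PrimeSpectrum A) hJ.1.2).trans
      (PrimeSpectrum.height_eq_orderHeight ⟨J, this⟩).ge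
  · refine le_iInf₂ fun P hP => ?_
    obtain ⟨J, hJ, hJP⟩ := exists_minimalPrimes_le hP
    have := hJ.isPrime
    exact (iInf₂_le J hJ).trans ((height_mono hJP).trans (PrimeSpectrum.height_eq_orderHeight P).le)

theorem Subring.isUnit_natCast_of_isField {A : Type*} [CommRing A] {F : Subring A}
    (hF : IsField F) [CharZero F] {n : ℕ} (hn : n ≠ 0) : IsUnit (n : A) := by
  let := hF.toField
  simpa using (Nat.cast_ne_zero.mpr hn : (n : F) ≠ 0).isUnit.map F.subtype

namespace Polynomial

theorem exists_eq_C_mul_X_sub_C_pow_of_dvd {K : Type*} [CommRing K] [IsDomain K] {p : K[X]}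
    {x : K} {k : ℕ} (h : p ∣ (X - C x) ^ k) : ∃ (c : K) (m : ℕ), p = C c * (X - C x) ^ m := by
  obtain ⟨m, -, u, hu⟩ := (dvd_prime_pow (prime_X_sub_C x) k).mp h
  obtain ⟨c, -, hc⟩ := Polynomial.isUnit_iff.mp (u⁻¹).isUnit
  exact ⟨c, m, by rw [hc, ← hu, mul_comm, Units.mul_inv_cancel_right]⟩

section

variable {R S : Type*} [CommRing R] [CommRing S] [Algebra R S]

theorem ker_aeval_eq_comap_span_X_sub_C (x : S) :
    RingHom.ker (aeval x : R[X] →ₐ[R] S) =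
      (span {X - C x}).comap (mapRingHom (algebraMap R S)) := by
  ext p
  rw [RingHom.mem_ker, mem_comap, mem_span_singleton, coe_mapRingHom, dvd_iff_isRoot, IsRoot,
    eval_map_algebraMap]

theorem mem_range_of_map_eq_C_mul_X_sub_C_pow [IsDomain S] {f : R[X]} {x c : S} {m : ℕ}
    (hf : IsUnit f.leadingCoeff) (hm : IsUnit (m : R))
    (h : f.map (algebraMap R S) = C c * (X - C x) ^ m) : x ∈ (algebraMap R S).range := by
  have hlead : algebraMap R S f.leadingCoeff = c := by
    rw [← leadingCoeff_map_eq_of_isUnit_leadingCoeff _ hf, h,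
      leadingCoeff_mul_monic ((monic_X_sub_C x).pow m), leadingCoeff_C]
  have hnext : algebraMap R S f.nextCoeff = c * (m • -x) := by
    rw [← nextCoeff_map_eq_of_isUnit_leadingCoeff _ hf, h, nextCoeff_C_mul,
      (monic_X_sub_C x).nextCoeff_pow, nextCoeff_X_sub_C]
  obtain ⟨u, hu⟩ := hf.mul hm
  refine ⟨-f.nextCoeff * ↑u⁻¹, (u.isUnit.map (algebraMap R S)).mul_left_inj.mp ?_⟩
  rw [← map_mul, mul_assoc, Units.inv_mul, mul_one, hu, map_neg, hnext, map_mul, hlead,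
    map_natCast, nsmul_eq_mul]
  ring

end

section Localization

attribute [local instance] Polynomial.algebra Polynomial.isLocalization

variable {R K : Type*} [CommRing R] (M : Submonoid R)

theorem height_ker_aeval [Field K] [Algebra R K] [IsLocalization M K] (x : K) :
    (RingHom.ker (aeval x : R[X] →ₐ[R] K)).height = 1 := by
  rw [ker_aeval_eq_comap_span_X_sub_C, ← algebraMap_def, ← under_def,
    IsLocalization.height_under (M.map C)]
  exact height_span_singleton_eq_one_of_mem_nonZeroDivisors
    (mem_nonZeroDivisors_of_ne_zero (X_sub_C_ne_zero x)) (not_isUnit_X_sub_C x)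

theorem exists_map_dvd_X_sub_C_pow_of_ker_aeval_eq_radical [CommRing K] [Algebra R K]
    [IsLocalization M K] {x : K} {f : R[X]}
    (hf : RingHom.ker (aeval x : R[X] →ₐ[R] K) = (span {f}).radical) :
    ∃ k : ℕ, f.map (algebraMap R K) ∣ (X - C x) ^ k := by
  have hker : RingHom.ker (aeval x : R[X] →ₐ[R] K) = (span {X - C x} : Ideal K[X]).under R[X] :=
    ker_aeval_eq_comap_span_X_sub_C x
  have hmap := IsLocalization.map_under (M.map C) K[X] (span {X - C x})
  have hspan : (span {f}).map (algebraMap R[X] K[X]) = span {f.map (algebraMap R K)} := by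
    rw [map_span, Set.image_singleton, algebraMap_def, coe_mapRingHom]
  rw [← hker, hf] at hmap
  have hmem : X - C x ∈ (span {f.map (algebraMap R K)}).radical := by
    rw [← hspan]
    apply map_radical_le
    rw [hmap]
    exact mem_span_singleton_self _
  obtain ⟨k, hk⟩ := hmem
  exact ⟨k, mem_span_singleton.mp hk⟩

end Localization

theorem mem_range_of_ker_aeval_eq_radical_span_singleton {R K : Type*} [CommRing R] [IsDomain R]
    [Field K] [Algebra R K] [IsFractionRing R K] (hR : ∀ n : ℕ, n ≠ 0 → IsUnit (n : R))
    {x : K} (hx : IsIntegral R x) {f : R[X]}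
    (hf : RingHom.ker (aeval x : R[X] →ₐ[R] K) = (span {f}).radical) :
    x ∈ (algebraMap R K).range := by
  have hfx : aeval x f = 0 := by
    rw [← RingHom.mem_ker, hf]
    exact le_radical (mem_span_singleton_self f)
  have hlead : IsUnit f.leadingCoeff := by
    obtain ⟨g, hg, hgx⟩ := hx
    obtain ⟨k, hk⟩ : g ∈ (span {f}).radical := by rw [← hf, RingHom.mem_ker, aeval_def, hgx]
    exact (hg.pow k).isUnit_leadingCoeff_of_dvd (mem_span_singleton.mp hk)
  obtain ⟨k, hk⟩ := exists_map_dvd_X_sub_C_pow_of_ker_aeval_eq_radical (nonZeroDivisors R) hf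
  obtain ⟨c, m, hfm⟩ := exists_eq_C_mul_X_sub_C_pow_of_dvd hk
  have hm : m ≠ 0 := by
    rintro rfl
    apply (hlead.map (algebraMap R K)).ne_zero
    rw [← leadingCoeff_map_eq_of_isUnit_leadingCoeff _ hlead, ← hfx, aeval_def, ← eval_map, hfm]
    simp
  exact mem_range_of_map_eq_C_mul_X_sub_C_pow hlead (hR m hm) hfm

end Polynomial

/-- If `R` is a domain containing a field of characteristic zero and each height one prime
ideal of `R[X]` is a set theoretic complete intersection, then `R` is normal, i.e.
integrally closed in its field of fractions. -/
theorem stmt_2 (R : Type*) [CommRing R] [IsDomain R]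
    (hfield : ∃ K : Subring R, IsField K ∧ CharZero K)
    (hSTCI : ∀ P : Ideal R[X], P.IsPrime → idealHeight P = 1 → IsSTCI P) :
    IsIntegrallyClosed R := by
  obtain ⟨F, hF, hFchar⟩ := hfield
  refine (isIntegrallyClosed_iff (FractionRing R)).mpr fun {x} hx => ?_
  set P := RingHom.ker (aeval x : R[X] →ₐ[R] FractionRing R)
  have hPprime : P.IsPrime := RingHom.ker_isPrime _
  have hP : idealHeight P = 1 := by
    rw [idealHeight_eq_height, height_ker_aeval (nonZeroDivisors R)]
  obtain ⟨n, hn, a, ha⟩ := hSTCI P hPprime hP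
  obtain rfl : n = 1 := by exact_mod_cast hn.trans hP
  have hPf : P = (span {a 0}).radical := by
    rw [← hPprime.radical, ha, Set.range_unique]
    rfl
  exact mem_range_of_ker_aeval_eq_radical_span_singleton
    (fun n hn => F.isUnit_natCast_of_isField hF hn) hx hPf
end

section
/- Let R be a Noetherian integral domain and P a nonzero prime ideal of R such that the extended ideal PR[X] of the polynomial ring R[X] is the radical of a single polynomial f in R[X]. Then f is a constant b lying in P and P = rad(Rb) in R. -/
/-!
A nonzero `a ∈ P` gives `f ∣ (C a)^n` for some `n`, so `f` has degree `0` in the domain `R`,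
i.e. `f = C b`. Since `I ↦ I R[X]` is injective with left inverse `comap C`, which commutes with
radicals, `P = comap C (rad (C b)) = rad (comap C (b R[X])) = rad (b R)`, and then `b ∈ P`.
-/

open Polynomial

theorem Ideal.comap_C_map_C {R : Type*} [CommSemiring R] (I : Ideal R) :
    (I.map (C : R →+* R[X])).comap C = I := by
  ext a
  rw [Ideal.mem_comap, Ideal.mem_map_C_iff]
  exact ⟨fun h ↦ by simpa using h 0, fun h n ↦ by rw [coeff_C]; split_ifs <;> simp [h]⟩

theorem Polynomial.natDegree_eq_zero_of_C_mem_radical_span {R : Type*} [CommRing R] [IsDomain R]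
    {f : R[X]} {a : R} (ha : a ≠ 0) (h : C a ∈ (Ideal.span {f}).radical) : f.natDegree = 0 := by
  obtain ⟨n, hn⟩ := h
  have := natDegree_le_of_dvd (Ideal.mem_span_singleton.mp hn) (pow_ne_zero n (C_ne_zero.mpr ha))
  rwa [← C_pow, natDegree_C, Nat.le_zero] at this

theorem stmt_14_general (R : Type*) [CommRing R] [IsDomain R]
    (P : Ideal R) (hP0 : P ≠ ⊥) (f : R[X])
    (hf : P.map (Polynomial.C : R →+* R[X]) = (Ideal.span {f}).radical) :
    ∃ b : R, b ∈ P ∧ f = Polynomial.C b ∧ P = (Ideal.span {b}).radical := by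
  obtain ⟨a, haP, ha0⟩ := Submodule.exists_mem_ne_zero_of_ne_bot hP0
  have hCa : C a ∈ (Ideal.span {f}).radical := hf ▸ Ideal.mem_map_of_mem C haP
  obtain ⟨b, rfl⟩ : ∃ b, f = C b :=
    ⟨_, eq_C_of_natDegree_eq_zero (natDegree_eq_zero_of_C_mem_radical_span ha0 hCa)⟩
  have hPb : P = (Ideal.span {b}).radical :=
    calc P = (P.map C).comap C := P.comap_C_map_C.symm
      _ = (((Ideal.span {b}).map C).comap C).radical := by
          rw [hf, Ideal.map_span, Set.image_singleton, Ideal.comap_radical]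
      _ = (Ideal.span {b}).radical := by rw [Ideal.comap_C_map_C]
  exact ⟨b, hPb ▸ Ideal.le_radical (Ideal.mem_span_singleton_self b), rfl, hPb⟩

/-- Let `R` be a Noetherian domain and `P` a nonzero prime ideal such that `P R[X]` is the
radical of a single polynomial `f`. Then `f` is a constant `b ∈ P` and `P = rad(Rb)`. -/
theorem stmt_14 (R : Type*) [CommRing R] [IsDomain R] [IsNoetherianRing R]
    (P : Ideal R) (hP : P.IsPrime) (hP0 : P ≠ ⊥) (f : R[X])
    (hf : P.map (Polynomial.C : R →+* R[X]) = (Ideal.span {f}).radical) :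
    ∃ b : R, b ∈ P ∧ f = Polynomial.C b ∧ P = (Ideal.span {b}).radical :=
  stmt_14_general R P hP0 f hf
end
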